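/- With Ĩ = {α ∈ Δ : (α̃|α) = 0}, one has w₀ w_Ĩ = w_Ĩ w₀ = s_{α̃}, i.e. the product of the longest element of W with the longest element of the parabolic subgroup W_Ĩ equals the reflection in the highest root α̃. -/

import Mathlib

/-!
Being longest, `w₀` sends every simple root, hence every positive root, to a negative root, and
so does `s_h w_Ĩ`; an element of `W` is determined by this property, since by the deletion
condition only `1` keeps all simple roots positive. For `s_h w_Ĩ`: a positive root in the span
of `Ĩ` is sent by `w_Ĩ` to a negative root orthogonal to `h`, which `s_h` fixes; any other
positive root `β` is moved by `w_Ĩ` only within `span Ĩ`, so it stays positive with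
`⟪w_Ĩ β, h⟫ > 0`, and `s_h` makes it negative. The same dichotomy gives `w_Ĩ² = 1`, and `w_Ĩ`
commutes with `s_h` because it fixes `h`.
-/

open scoped RealInnerProductSpace Classical

noncomputable section

variable {V : Type} [NormedAddCommGroup V] [InnerProductSpace ℝ V] [FiniteDimensional ℝ V]

/-- The orthogonal reflection of `V` in the hyperplane orthogonal to `α`
(the reflection `s_α` when `α` is a root). -/
def sref (α : V) : V ≃ₗᵢ[ℝ] V := Submodule.reflection (Submodule.span ℝ {α})ᗮ

/-- The pairing `⟨β, γ∨⟩ = 2(β|γ)/(γ|γ)` of a vector with the coroot of `γ`. -/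
def cpair (β γ : V) : ℝ := 2 * ⟪β, γ⟫ / ⟪γ, γ⟫

/-- An irreducible reduced (crystallographic) root system in the real inner product
space `V`, the inner product being invariant under the Weyl group (automatic, since
reflections are isometries), normalized so that the shortest roots have squared length `1`. -/
structure NRootSystem (V : Type) [NormedAddCommGroup V] [InnerProductSpace ℝ V]
    [FiniteDimensional ℝ V] where
  Φ : Finset V
  nonempty : Φ.Nonempty
  zero_not_mem : (0 : V) ∉ Φ
  span_eq_top : Submodule.span ℝ (Φ : Set V) = ⊤
  reduced : ∀ α ∈ Φ, ∀ t : ℝ, t • α ∈ Φ → t = 1 ∨ t = -1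
  pairing_int : ∀ α ∈ Φ, ∀ β ∈ Φ, ∃ n : ℤ, 2 * ⟪β, α⟫ = n * ⟪α, α⟫
  reflect_mem : ∀ α ∈ Φ, ∀ β ∈ Φ, sref α β ∈ Φ
  irreducible : ∀ S : Finset V, S ⊆ Φ → S.Nonempty → (Φ \ S).Nonempty →
    ∃ α ∈ S, ∃ β ∈ Φ \ S, ⟪α, β⟫ ≠ 0
  norm_one_le : ∀ α ∈ Φ, 1 ≤ ⟪α, α⟫
  exists_norm_one : ∃ α ∈ Φ, ⟪α, α⟫ = 1

namespace NRootSystem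

variable (R : NRootSystem V)

/-- `r`, the maximal squared length of a root. -/
def r : ℝ := R.Φ.sup' R.nonempty fun α => ⟪α, α⟫

/-- long roots -/
def IsLong (α : V) : Prop := α ∈ R.Φ ∧ ⟪α, α⟫ = R.r

/-- short roots -/
def IsShort (α : V) : Prop := α ∈ R.Φ ∧ ⟪α, α⟫ < R.r

/-- The Weyl group `W`, generated by the reflections in the roots. -/
def Weyl : Subgroup (V ≃ₗᵢ[ℝ] V) := Subgroup.closure (sref '' (R.Φ : Set V))

end NRootSystem

/-- The standard parabolic subgroup `W_I` generated by the reflections in `I ⊆ Δ`. -/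
def WeylP (I : Finset V) : Subgroup (V ≃ₗᵢ[ℝ] V) := Subgroup.closure (sref '' (I : Set V))

/-- A base (set of simple roots) `Δ` of the root system, together with the
integral coordinates `coeff γ α` of each root `γ` in the basis `Δ`; every root is a
nonnegative or a nonpositive integral combination of the simple roots. -/
structure Base {V : Type} [NormedAddCommGroup V] [InnerProductSpace ℝ V]
    [FiniteDimensional ℝ V] (R : NRootSystem V) where
  Δ : Finset V
  subset : Δ ⊆ R.Φ
  indep : LinearIndependent ℝ (fun a : {x : V // x ∈ Δ} => (a : V))
  coeff : V → V → ℤ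
  coeff_spec : ∀ γ ∈ R.Φ, γ = ∑ α ∈ Δ, (coeff γ α : ℝ) • α
  coeff_sign : ∀ γ ∈ R.Φ, (∀ α ∈ Δ, 0 ≤ coeff γ α) ∨ (∀ α ∈ Δ, coeff γ α ≤ 0)

namespace Base

variable {R : NRootSystem V} (B : Base R)

/-- positive roots -/
def IsPos (γ : V) : Prop := γ ∈ R.Φ ∧ ∀ α ∈ B.Δ, 0 ≤ B.coeff γ α

/-- negative roots -/
def IsNeg (γ : V) : Prop := γ ∈ R.Φ ∧ ∀ α ∈ B.Δ, B.coeff γ α ≤ 0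

/-- the height of a root -/
def ht (γ : V) : ℤ := ∑ α ∈ B.Δ, B.coeff γ α

/-- the dual height `ht∨ γ = ht (γ∨)`: the height of the coroot `γ∨ = 2γ/(γ|γ)`
with respect to the basis of simple coroots `α∨ = 2α/(α|α)`, `α ∈ Δ`. -/
def htv (γ : V) : ℝ := ∑ α ∈ B.Δ, (B.coeff γ α : ℝ) * ⟪α, α⟫ / ⟪γ, γ⟫

/-- The length of `w`: the minimal length of an expression of `w` as a product of
simple reflections. -/
def len (w : V ≃ₗᵢ[ℝ] V) : ℕ :=
  sInf {n | ∃ g : Fin n → V, (∀ i, g i ∈ B.Δ) ∧ w = (List.ofFn fun i => sref (g i)).prod}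

/-- `w` is the longest element of the subgroup `H`. -/
def IsLongest (H : Subgroup (V ≃ₗᵢ[ℝ] V)) (w : V ≃ₗᵢ[ℝ] V) : Prop :=
  w ∈ H ∧ ∀ u ∈ H, B.len u ≤ B.len w

/-- `X_I = {w ∈ W | w(Φ_I⁺) ⊆ Φ⁺}`, the set of minimal length coset
representatives of `W/W_I`. -/
def XI (I : Finset V) : Set (V ≃ₗᵢ[ℝ] V) :=
  {w | w ∈ R.Weyl ∧
    ∀ γ, γ ∈ R.Φ → γ ∈ Submodule.span ℝ (I : Set V) → B.IsPos γ → B.IsPos (w γ)}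

/-- `h` is the highest root. -/
def IsHighest (h : V) : Prop :=
  h ∈ R.Φ ∧ ∀ γ ∈ R.Φ, ∀ α ∈ B.Δ, B.coeff γ α ≤ B.coeff h α

/-- `Ĩ = {α ∈ Δ | (h|α) = 0}`, the simple roots orthogonal to the highest root `h`. -/
def Itil (h : V) : Finset V := B.Δ.filter fun α => ⟪h, α⟫ = 0

/-- The level `L(α)` of a long root `α`, where `h` is the highest root:
`L(α) = ht∨(h) − ht∨(α)` if `α > 0` and `L(α) = ht∨(h) − ht∨(α) − 1` if `α < 0`. -/
def level (h α : V) : ℝ :=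
  if B.IsPos α then B.htv h - B.htv α else B.htv h - B.htv α - 1

/-- The elementary step relation `β →_γ α` on long roots (`γ` a positive root):
`α = s_γ(β)` and `L(α) = L(β) + 1`. -/
def Step (h γ β α : V) : Prop :=
  R.IsLong β ∧ R.IsLong α ∧ B.IsPos γ ∧ α = sref γ β ∧
    B.level h α = B.level h β + 1

/-- `g` is the sequence of positive roots of a path
`β = β₀ →_{g 0} β₁ →_{g 1} ⋯ →_{g (n-1)} β_n = α` from `β` to `α`. -/
def IsPathWord (h : V) {n : ℕ} (g : Fin n → V) (β α : V) : Prop :=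
  ∃ c : Fin (n + 1) → V, c 0 = β ∧ c (Fin.last n) = α ∧
    ∀ i : Fin n, B.Step h (g i) (c i.castSucc) (c i.succ)

/-- a path all of whose steps use simple roots -/
def IsSimplePathWord (h : V) {n : ℕ} (g : Fin n → V) (β α : V) : Prop :=
  B.IsPathWord h g β α ∧ ∀ i, g i ∈ B.Δ

/-- there is a path from `β` to `α`, i.e. `α ⪯ β` -/
def HasPath (h β α : V) : Prop := ∃ (n : ℕ) (g : Fin n → V), B.IsPathWord h g β α

/-- there is a simple path from `β` to `α` -/
def HasSimplePath (h β α : V) : Prop :=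
  ∃ (n : ℕ) (g : Fin n → V), B.IsSimplePathWord h g β α

/-- The covering relation `w →_γ w'` for the Bruhat order:
`w' = s_γ w` and `l(w') = l(w) + 1`, for a positive root `γ`. -/
def BStep (γ : V) (w w' : V ≃ₗᵢ[ℝ] V) : Prop :=
  B.IsPos γ ∧ w' = sref γ * w ∧ B.len w' = B.len w + 1

/-- The Bruhat order on `W`: the reflexive–transitive closure of the covering
relations. -/
def bruhatLE : (V ≃ₗᵢ[ℝ] V) → (V ≃ₗᵢ[ℝ] V) → Prop :=
  Relation.ReflTransGen fun w w' => ∃ γ, B.BStep γ w w'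

/-- `x` is an element of `W` with `x(β) = α` of the minimal possible length
`|L(α) − L(β)|` (this is the element `x_{αβ}` when it exists). -/
def MinTake (h β α : V) (x : V ≃ₗᵢ[ℝ] V) : Prop :=
  x ∈ R.Weyl ∧ x β = α ∧ (B.len x : ℝ) = |B.level h α - B.level h β|

/-- `g` is a reduced expression of `x` as a product of simple reflections. -/
def IsReducedWord {n : ℕ} (g : Fin n → V) (x : V ≃ₗᵢ[ℝ] V) : Prop :=
  (∀ i, g i ∈ B.Δ) ∧ x = (List.ofFn fun i => sref (g i)).prod ∧ n = B.len x

/-- The depth of a positive root `β`: the minimal integer `k` such that there is an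
element `w` of `W` of length `k` with `w(β) < 0`. -/
def depth (β : V) : ℕ := sInf {n | ∃ w ∈ R.Weyl, B.len w = n ∧ B.IsNeg (w β)}

end Base

section

omit [FiniteDimensional ℝ V]

lemma sref_apply (α v : V) : sref α v = v - cpair v α • α := by
  rw [sref, Submodule.reflection_orthogonal_apply, Submodule.reflection_singleton_apply]
  simp only [RCLike.ofReal_real_eq_id, id_eq]
  rw [← real_inner_self_eq_norm_sq, cpair, real_inner_comm, two_smul, two_mul, add_div,
    add_smul]
  abel

lemma sref_apply_of_inner_eq_zero {α v : V} (hv : ⟪v, α⟫ = 0) : sref α v = v := by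
  simp [sref_apply, cpair, hv]

@[simp] lemma sref_mul_self (α : V) : sref α * sref α = 1 :=
  Submodule.reflection_mul_reflection _

@[simp] lemma sref_inv (α : V) : (sref α)⁻¹ = sref α := Submodule.reflection_inv

lemma sref_self (α : V) : sref α α = -α :=
  Submodule.reflection_orthogonalComplement_singleton_eq_neg α

lemma sref_neg (α : V) : sref (-α) = sref α := by
  ext v
  simp only [sref_apply, cpair, inner_neg_right, inner_neg_left, neg_neg, smul_neg, mul_neg,
    neg_div, neg_smul, sub_eq_add_neg]

lemma mul_sref_mul_inv (u : V ≃ₗᵢ[ℝ] V) (α : V) : u * sref α * u⁻¹ = sref (u α) := by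
  ext v
  have hv : ⟪u⁻¹ v, α⟫ = ⟪v, u α⟫ := by
    rw [← u.inner_map_map]
    exact congrArg (⟪·, u α⟫) (u.apply_symm_apply v)
  change u (sref α (u⁻¹ v)) = _
  rw [sref_apply, sref_apply, map_sub, map_smul, cpair, cpair, hv, u.inner_map_map]
  exact congrArg (· - _) (u.apply_symm_apply v)

lemma exists_list_of_mem_weylP {I : Finset V} {w : V ≃ₗᵢ[ℝ] V} (hw : w ∈ WeylP I) :
    ∃ l : List V, (∀ x ∈ l, x ∈ I) ∧ w = (l.map sref).prod := by
  induction hw using Subgroup.closure_induction'' with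
  | mem _ hx | inv_mem _ hx =>
    obtain ⟨α, hα, rfl⟩ := hx
    exact ⟨[α], by simpa using hα, by simp⟩
  | one => exact ⟨[], by simp, by simp⟩
  | mul _ _ _ _ hx hy =>
    obtain ⟨l₁, hl₁, rfl⟩ := hx
    obtain ⟨l₂, hl₂, rfl⟩ := hy
    refine ⟨l₁ ++ l₂, fun x hx => ?_, by simp⟩
    rcases List.mem_append.mp hx with hx | hx
    exacts [hl₁ x hx, hl₂ x hx]

lemma weylP_apply_sub_mem_span {I : Finset V} {w : V ≃ₗᵢ[ℝ] V} (hw : w ∈ WeylP I) (x : V) :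
    w x - x ∈ Submodule.span ℝ (I : Set V) := by
  induction hw using Subgroup.closure_induction'' generalizing x with
  | mem _ hx | inv_mem _ hx =>
    obtain ⟨α, hα, rfl⟩ := hx
    simp only [sref_inv, sref_apply, sub_sub_cancel_left]
    exact Submodule.neg_mem _ (Submodule.smul_mem _ _ (Submodule.subset_span hα))
  | one => simp
  | mul u v _ _ hu hv =>
    change u (v x) - x ∈ _
    rw [show u (v x) - x = (u (v x) - v x) + (v x - x) by abel]
    exact Submodule.add_mem _ (hu _) (hv x)

lemma weylP_apply_mem_span {I : Finset V} {w : V ≃ₗᵢ[ℝ] V} (hw : w ∈ WeylP I) {x : V}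
    (hx : x ∈ Submodule.span ℝ (I : Set V)) : w x ∈ Submodule.span ℝ (I : Set V) := by
  simpa using Submodule.add_mem _ (weylP_apply_sub_mem_span hw x) hx

lemma weylP_apply_eq_self {I : Finset V} {v : V} (hv : ∀ α ∈ I, ⟪v, α⟫ = 0)
    {w : V ≃ₗᵢ[ℝ] V} (hw : w ∈ WeylP I) : w v = v := by
  induction hw using Subgroup.closure_induction'' with
  | mem _ hx | inv_mem _ hx =>
    obtain ⟨α, hα, rfl⟩ := hx
    simpa only [sref_inv] using sref_apply_of_inner_eq_zero (hv α hα)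
  | one => rfl
  | mul u u' _ _ hu hu' => exact (congrArg u hu').trans hu

end

namespace NRootSystem

variable (R : NRootSystem V)

lemma ne_zero_of_mem {γ : V} (hγ : γ ∈ R.Φ) : γ ≠ 0 :=
  fun h => R.zero_not_mem (h ▸ hγ)

lemma inner_self_pos_of_mem {γ : V} (hγ : γ ∈ R.Φ) : 0 < ⟪γ, γ⟫ :=
  real_inner_self_pos.mpr (R.ne_zero_of_mem hγ)

lemma neg_mem {γ : V} (hγ : γ ∈ R.Φ) : -γ ∈ R.Φ := by
  simpa [sref_self] using R.reflect_mem γ hγ γ hγ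

lemma exists_sref_eq_sub_zsmul {α β : V} (hα : α ∈ R.Φ) (hβ : β ∈ R.Φ) :
    ∃ n : ℤ, 2 * ⟪β, α⟫ = n * ⟪α, α⟫ ∧ sref α β = β - (n : ℝ) • α := by
  obtain ⟨n, hn⟩ := R.pairing_int α hα β hβ
  refine ⟨n, hn, ?_⟩
  rw [sref_apply, cpair, hn, mul_div_cancel_right₀ _ (R.inner_self_pos_of_mem hα).ne']

lemma sref_mem_weyl {γ : V} (hγ : γ ∈ R.Φ) : sref γ ∈ R.Weyl :=
  Subgroup.subset_closure ⟨γ, hγ, rfl⟩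

lemma weyl_apply_mem {w : V ≃ₗᵢ[ℝ] V} (hw : w ∈ R.Weyl) {γ : V} (hγ : γ ∈ R.Φ) :
    w γ ∈ R.Φ := by
  induction hw using Subgroup.closure_induction'' generalizing γ with
  | mem _ hx | inv_mem _ hx =>
    obtain ⟨α, hα, rfl⟩ := hx
    simpa only [sref_inv] using R.reflect_mem α hα γ hγ
  | one => exact hγ
  | mul _ _ _ _ hx hy => exact hx (hy hγ)

end NRootSystem

lemma weylP_le_weyl {R : NRootSystem V} {I : Finset V} (hI : I ⊆ R.Φ) : WeylP I ≤ R.Weyl :=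
  Subgroup.closure_mono (Set.image_mono hI)

namespace Base

variable {R : NRootSystem V} (B : Base R)

lemma span_simple_eq_top : Submodule.span ℝ (Set.range fun α : B.Δ => (α : V)) = ⊤ := by
  rw [Subtype.range_coe_subtype, Finset.setOfPred_mem, eq_top_iff, ← R.span_eq_top,
    Submodule.span_le]
  intro γ hγ
  rw [B.coeff_spec γ hγ]
  exact Submodule.sum_mem _ fun α hα => Submodule.smul_mem _ _ (Submodule.subset_span hα)

def basis : Module.Basis B.Δ ℝ V := .mk B.indep B.span_simple_eq_top.ge

@[simp] lemma basis_apply (α : B.Δ) : B.basis α = α := Module.Basis.mk_apply ..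

lemma coeff_eq_coord {γ : V} (hγ : γ ∈ R.Φ) {α : V} (hα : α ∈ B.Δ) :
    (B.coeff γ α : ℝ) = B.basis.coord ⟨α, hα⟩ γ := by
  have hsum : γ = ∑ δ : B.Δ, (B.coeff γ δ : ℝ) • B.basis δ := by
    simp only [basis_apply]
    rw [Finset.sum_coe_sort B.Δ fun δ => (B.coeff γ δ : ℝ) • δ]
    exact B.coeff_spec γ hγ
  conv_rhs => rw [hsum]
  rw [Module.Basis.coord_apply, B.basis.repr_sum_self]

lemma coord_eq_zero_of_mem_span {S : Finset V} (hS : S ⊆ B.Δ) {x : V}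
    (hx : x ∈ Submodule.span ℝ (S : Set V)) {α : V} (hα : α ∈ B.Δ) (hαS : α ∉ S) :
    B.basis.coord ⟨α, hα⟩ x = 0 := by
  suffices Submodule.span ℝ (S : Set V) ≤ LinearMap.ker (B.basis.coord ⟨α, hα⟩) from this hx
  refine Submodule.span_le.mpr fun δ hδ => ?_
  have hne : (⟨δ, hS hδ⟩ : B.Δ) ≠ ⟨α, hα⟩ := by
    rintro ⟨⟩
    exact hαS hδ
  exact Module.Basis.mk_coord_apply_ne (v := fun δ : B.Δ => (δ : V)) hne

lemma mem_span_iff_coeff_eq_zero {S : Finset V} (hS : S ⊆ B.Δ) {β : V} (hβ : β ∈ R.Φ) :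
    β ∈ Submodule.span ℝ (S : Set V) ↔ ∀ α ∈ B.Δ, α ∉ S → B.coeff β α = 0 := by
  refine ⟨fun hβS α hα hαS => ?_, fun h => ?_⟩
  · exact_mod_cast (B.coeff_eq_coord hβ hα).trans (B.coord_eq_zero_of_mem_span hS hβS hα hαS)
  · rw [B.coeff_spec β hβ, ← Finset.sum_subset hS fun α hα hαS => by simp [h α hα hαS]]
    exact Submodule.sum_mem _ fun α hα => Submodule.smul_mem _ _ (Submodule.subset_span hα)

lemma coeff_eq_of_sub_mem_span {S : Finset V} (hS : S ⊆ B.Δ) {x y : V} (hx : x ∈ R.Φ)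
    (hy : y ∈ R.Φ) (hxy : x - y ∈ Submodule.span ℝ (S : Set V)) {α : V} (hα : α ∈ B.Δ)
    (hαS : α ∉ S) : B.coeff x α = B.coeff y α := by
  have := B.coord_eq_zero_of_mem_span hS hxy hα hαS
  rw [map_sub, sub_eq_zero, ← B.coeff_eq_coord hx, ← B.coeff_eq_coord hy] at this
  exact_mod_cast this

lemma coeff_neg {γ : V} (hγ : γ ∈ R.Φ) {α : V} (hα : α ∈ B.Δ) :
    B.coeff (-γ) α = -B.coeff γ α := by
  have := B.coeff_eq_coord (R.neg_mem hγ) hα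
  rw [map_neg, ← B.coeff_eq_coord hγ] at this
  exact_mod_cast this

lemma coeff_simple {α δ : V} (hα : α ∈ B.Δ) (hδ : δ ∈ B.Δ) :
    B.coeff α δ = if α = δ then 1 else 0 := by
  have h : (B.coeff α δ : ℝ) = Finsupp.single (⟨α, hα⟩ : B.Δ) 1 ⟨δ, hδ⟩ := by
    rw [B.coeff_eq_coord (B.subset hα) hδ, ← B.basis.repr_self,
      ← Module.Basis.coord_apply, B.basis_apply]
  rw [Finsupp.single_apply] at h
  split_ifs at h ⊢ <;> simp_all

lemma exists_coeff_sref {α β : V} (hα : α ∈ R.Φ) (hβ : β ∈ R.Φ) :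
    ∃ n : ℤ, 2 * ⟪β, α⟫ = n * ⟪α, α⟫ ∧
      ∀ δ ∈ B.Δ, B.coeff (sref α β) δ = B.coeff β δ - n * B.coeff α δ := by
  obtain ⟨n, hn, hs⟩ := R.exists_sref_eq_sub_zsmul hα hβ
  refine ⟨n, hn, fun δ hδ => ?_⟩
  have key : B.basis.coord ⟨δ, hδ⟩ (sref α β)
      = B.basis.coord ⟨δ, hδ⟩ β - n * B.basis.coord ⟨δ, hδ⟩ α := by
    rw [hs, map_sub, map_smul, smul_eq_mul]
  rw [← B.coeff_eq_coord (R.reflect_mem α hα β hβ), ← B.coeff_eq_coord hβ,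
    ← B.coeff_eq_coord hα] at key
  exact_mod_cast key

lemma inner_eq_sum_coeff (x : V) {γ : V} (hγ : γ ∈ R.Φ) :
    ⟪x, γ⟫ = ∑ α ∈ B.Δ, (B.coeff γ α : ℝ) * ⟪x, α⟫ := by
  conv_lhs => rw [B.coeff_spec γ hγ]
  simp only [inner_sum, real_inner_smul_right]

lemma exists_coeff_ne_zero {γ : V} (hγ : γ ∈ R.Φ) : ∃ α ∈ B.Δ, B.coeff γ α ≠ 0 := by
  by_contra! h
  apply R.ne_zero_of_mem hγ
  rw [B.coeff_spec γ hγ]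
  exact Finset.sum_eq_zero fun α hα => by rw [h α hα, Int.cast_zero, zero_smul]

lemma isPos_or_isNeg {γ : V} (hγ : γ ∈ R.Φ) : B.IsPos γ ∨ B.IsNeg γ :=
  (B.coeff_sign γ hγ).imp (⟨hγ, ·⟩) (⟨hγ, ·⟩)

variable {B}

lemma IsPos.not_isNeg {γ : V} (hp : B.IsPos γ) : ¬ B.IsNeg γ := fun hn => by
  obtain ⟨α, hα, hne⟩ := B.exists_coeff_ne_zero hp.1
  exact hne (le_antisymm (hn.2 α hα) (hp.2 α hα))

lemma IsPos.neg {γ : V} (h : B.IsPos γ) : B.IsNeg (-γ) :=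
  ⟨R.neg_mem h.1, fun α hα => by rw [B.coeff_neg h.1 hα]; exact neg_nonpos.mpr (h.2 α hα)⟩

lemma IsNeg.neg {γ : V} (h : B.IsNeg γ) : B.IsPos (-γ) :=
  ⟨R.neg_mem h.1, fun α hα => by rw [B.coeff_neg h.1 hα]; exact neg_nonneg.mpr (h.2 α hα)⟩

lemma isNeg_of_not_isPos {γ : V} (hγ : γ ∈ R.Φ) (h : ¬ B.IsPos γ) : B.IsNeg γ :=
  (B.isPos_or_isNeg hγ).resolve_left h

lemma isPos_of_not_isNeg {γ : V} (hγ : γ ∈ R.Φ) (h : ¬ B.IsNeg γ) : B.IsPos γ :=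
  (B.isPos_or_isNeg hγ).resolve_right h

lemma isPos_simple {α : V} (hα : α ∈ B.Δ) : B.IsPos α :=
  ⟨B.subset hα, fun δ hδ => by rw [B.coeff_simple hα hδ]; split_ifs <;> simp⟩

/-- A positive root `β ≠ α` has a positive coordinate at some simple root other than `α`, which
`sref α` does not change. -/
lemma isPos_sref_simple {α β : V} (hα : α ∈ B.Δ) (hβ : B.IsPos β) (hne : β ≠ α) :
    B.IsPos (sref α β) := by
  obtain ⟨n, -, hcoeff⟩ := B.exists_coeff_sref (B.subset hα) hβ.1
  obtain ⟨δ, hδ, hδα, hδpos⟩ : ∃ δ ∈ B.Δ, δ ≠ α ∧ 0 < B.coeff β δ := by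
    by_contra! h
    have hβα : β = (B.coeff β α : ℝ) • α := by
      conv_lhs => rw [B.coeff_spec β hβ.1]
      refine Finset.sum_eq_single α (fun δ hδ hδα => ?_) (absurd hα)
      rw [le_antisymm (h δ hδ hδα) (hβ.2 δ hδ), Int.cast_zero, zero_smul]
    rcases R.reduced α (B.subset hα) _ (hβα ▸ hβ.1) with h1 | h1
    · exact hne (by rw [hβα, h1, one_smul])
    · have : (0 : ℝ) ≤ B.coeff β α := by exact_mod_cast hβ.2 α hα
      linarith
  refine B.isPos_of_not_isNeg (R.reflect_mem α (B.subset hα) β hβ.1) fun hneg => ?_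
  have := hneg.2 δ hδ
  rw [hcoeff δ hδ, B.coeff_simple hα hδ, if_neg hδα.symm] at this
  omega

lemma IsPos.ht_pos {γ : V} (hγ : B.IsPos γ) : 0 < B.ht γ := by
  obtain ⟨α, hα, hne⟩ := B.exists_coeff_ne_zero hγ.1
  exact Finset.sum_pos' (fun δ hδ => hγ.2 δ hδ) ⟨α, hα, lt_of_le_of_ne (hγ.2 α hα) hne.symm⟩

lemma IsPos.exists_inner_pos {γ : V} (hγ : B.IsPos γ) : ∃ α ∈ B.Δ, 0 < ⟪γ, α⟫ := by
  by_contra! h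
  have : ⟪γ, γ⟫ ≤ 0 := by
    rw [B.inner_eq_sum_coeff γ hγ.1]
    exact Finset.sum_nonpos fun α hα =>
      mul_nonpos_of_nonneg_of_nonpos (by exact_mod_cast hγ.2 α hα) (h α hα)
  exact this.not_gt (R.inner_self_pos_of_mem hγ.1)

lemma ht_sref_simple {α β : V} (hα : α ∈ B.Δ) (hβ : β ∈ R.Φ) :
    ∃ n : ℤ, 2 * ⟪β, α⟫ = n * ⟪α, α⟫ ∧ B.ht (sref α β) = B.ht β - n := by
  obtain ⟨n, hn, hcoeff⟩ := B.exists_coeff_sref (B.subset hα) hβ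
  refine ⟨n, hn, ?_⟩
  simp only [ht, Finset.sum_congr rfl hcoeff, Finset.sum_sub_distrib, ← Finset.mul_sum,
    Finset.sum_congr rfl fun δ hδ => B.coeff_simple hα hδ, Finset.sum_ite_eq, if_pos hα,
    mul_one]

lemma sref_mem_weylP_of_isPos {γ : V} (hγ : B.IsPos γ) : sref γ ∈ WeylP B.Δ := by
  obtain ⟨k, hk⟩ : ∃ k : ℕ, B.ht γ ≤ k := ⟨(B.ht γ).toNat, Int.self_le_toNat _⟩
  induction k generalizing γ with
  | zero => exact absurd hγ.ht_pos (by omega)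
  | succ k ih =>
    by_cases hγΔ : γ ∈ B.Δ
    · exact Subgroup.subset_closure ⟨γ, hγΔ, rfl⟩
    obtain ⟨α, hα, hγα⟩ := hγ.exists_inner_pos
    obtain ⟨n, hn, hht⟩ := B.ht_sref_simple hα hγ.1
    have hn_pos : 0 < n := by
      have hαα := R.inner_self_pos_of_mem (B.subset hα)
      have : (0 : ℝ) < n := by nlinarith
      exact_mod_cast this
    have hsγ : B.IsPos (sref α γ) := isPos_sref_simple hα hγ fun h => hγΔ (h ▸ hα)
    have hsα : sref α ∈ WeylP B.Δ := Subgroup.subset_closure ⟨α, hα, rfl⟩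
    have hconj : sref γ = sref α * sref (sref α γ) * (sref α)⁻¹ := by
      rw [← mul_sref_mul_inv, ← mul_assoc, ← mul_assoc, sref_mul_self, one_mul, mul_assoc,
        sref_inv, sref_mul_self, mul_one]
    rw [hconj]
    exact mul_mem (mul_mem hsα (ih hsγ (by omega))) (inv_mem hsα)

lemma weyl_le_weylP : R.Weyl ≤ WeylP B.Δ := by
  refine Subgroup.closure_le _ |>.mpr ?_
  rintro _ ⟨γ, hγ, rfl⟩
  rcases B.isPos_or_isNeg hγ with hpos | hneg
  · exact B.sref_mem_weylP_of_isPos hpos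
  · rw [← sref_neg]
    exact B.sref_mem_weylP_of_isPos hneg.neg

variable (B)

lemma len_prod_le_length {l : List V} (hl : ∀ x ∈ l, x ∈ B.Δ) :
    B.len (l.map sref).prod ≤ l.length :=
  Nat.sInf_le ⟨l.get, fun i => hl _ (l.get_mem i),
    congrArg List.prod (List.ofFn_getElem_eq_map l sref).symm⟩

lemma exists_reduced_word {w : V ≃ₗᵢ[ℝ] V} (hw : w ∈ R.Weyl) :
    ∃ l : List V, (∀ x ∈ l, x ∈ B.Δ) ∧ l.length = B.len w ∧ w = (l.map sref).prod := by
  obtain ⟨l, hl, rfl⟩ := exists_list_of_mem_weylP (B.weyl_le_weylP hw)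
  have hmem : B.len (l.map sref).prod ∈ {n | ∃ g : Fin n → V,
      (∀ i, g i ∈ B.Δ) ∧ (l.map sref).prod = (List.ofFn fun i => sref (g i)).prod} :=
    Nat.sInf_mem ⟨l.length, l.get, fun i => hl _ (l.get_mem i),
      congrArg List.prod (List.ofFn_getElem_eq_map l sref).symm⟩
  obtain ⟨g, hg, hw⟩ := hmem
  refine ⟨List.ofFn g, fun x hx => ?_, List.length_ofFn, by rw [List.map_ofFn]; exact hw⟩
  obtain ⟨i, rfl⟩ := List.mem_ofFn.mp hx
  exact hg i

/-- The deletion condition. -/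
lemma exists_word_mul_sref_of_not_isPos {l : List V} (hl : ∀ x ∈ l, x ∈ B.Δ) {α : V}
    (hα : α ∈ B.Δ) (hneg : ¬ B.IsPos ((l.map sref).prod α)) :
    ∃ l' : List V, (∀ x ∈ l', x ∈ B.Δ) ∧ l'.length + 1 = l.length ∧
      (l.map sref).prod * sref α = (l'.map sref).prod := by
  induction l with
  | nil => exact absurd (B.isPos_simple hα) (by simpa using hneg)
  | cons a t ih =>
    have ha : a ∈ B.Δ := hl a List.mem_cons_self
    have ht : ∀ x ∈ t, x ∈ B.Δ := fun x hx => hl x (List.mem_cons_of_mem _ hx)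
    set u := (t.map sref).prod with hu
    have hprod : ((a :: t).map sref).prod = sref a * u := by simp [hu]
    by_cases hpos : B.IsPos (u α)
    · -- `sref a` sends the positive root `u α` to a negative root, so `u α = a`
      have hua : u α = a := by
        by_contra hne
        exact hneg (hprod ▸ isPos_sref_simple ha hpos hne)
      refine ⟨t, ht, by simp, ?_⟩
      rw [hprod, ← hua, ← mul_sref_mul_inv, inv_mul_cancel_right, mul_assoc, sref_mul_self,
        mul_one]
    · obtain ⟨t', ht', hlen, hprod'⟩ := ih ht hpos
      refine ⟨a :: t', ?_, by simp [← hlen], ?_⟩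
      · simpa [ha] using ht'
      · rw [hprod, mul_assoc, hprod']
        simp

lemma len_lt_len_mul_sref {w : V ≃ₗᵢ[ℝ] V} (hw : w ∈ R.Weyl) {α : V} (hα : α ∈ B.Δ)
    (hpos : B.IsPos (w α)) : B.len w < B.len (w * sref α) := by
  obtain ⟨l, hl, hlen, hprod⟩ :=
    B.exists_reduced_word (mul_mem hw (R.sref_mem_weyl (B.subset hα)))
  have hneg : ¬ B.IsPos ((l.map sref).prod α) := by
    rw [← hprod, LinearIsometryEquiv.coe_mul, Function.comp_apply, sref_self, map_neg]
    exact fun h => h.not_isNeg hpos.neg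
  obtain ⟨l', hl', hlen', hprod'⟩ := B.exists_word_mul_sref_of_not_isPos hl hα hneg
  have hw' : w = (l'.map sref).prod := by
    rw [← hprod', ← hprod, mul_assoc, sref_mul_self, mul_one]
  have := B.len_prod_le_length hl'
  rw [← hw'] at this
  omega

lemma eq_one_of_forall_isPos {w : V ≃ₗᵢ[ℝ] V} (hw : w ∈ R.Weyl)
    (hpos : ∀ α ∈ B.Δ, B.IsPos (w α)) : w = 1 := by
  obtain ⟨l, hl, hlen, hprod⟩ := B.exists_reduced_word hw
  rcases List.eq_nil_or_concat' l with rfl | ⟨l', a, rfl⟩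
  · simpa using hprod
  have ha : a ∈ B.Δ := hl a (by simp)
  have hl' : ∀ x ∈ l', x ∈ B.Δ := fun x hx => hl x (by simp [hx])
  have hw' : w * sref a = (l'.map sref).prod := by simp [hprod, mul_assoc]
  have h₁ := B.len_lt_len_mul_sref hw ha (hpos a ha)
  have h₂ := B.len_prod_le_length hl'
  rw [← hw'] at h₂
  simp only [List.length_append, List.length_singleton] at hlen
  omega

variable {B}

lemma IsLongest.isNeg_apply {H : Subgroup (V ≃ₗᵢ[ℝ] V)} (hH : H ≤ R.Weyl)
    {w : V ≃ₗᵢ[ℝ] V} (hw : B.IsLongest H w) {α : V} (hα : α ∈ B.Δ) (hsα : sref α ∈ H) :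
    B.IsNeg (w α) := by
  refine B.isNeg_of_not_isPos (R.weyl_apply_mem (hH hw.1) (B.subset hα)) fun hpos => ?_
  have := B.len_lt_len_mul_sref (hH hw.1) hα hpos
  exact this.not_ge (hw.2 _ (mul_mem hw.1 hsα))

lemma isNeg_apply_of_mem_span {w : V ≃ₗᵢ[ℝ] V} (hw : w ∈ R.Weyl) {S : Finset V}
    (hS : S ⊆ B.Δ) (hwS : ∀ α ∈ S, B.IsNeg (w α)) {β : V} (hβ : B.IsPos β)
    (hβS : β ∈ Submodule.span ℝ (S : Set V)) : B.IsNeg (w β) := by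
  have hwβ := R.weyl_apply_mem hw hβ.1
  refine ⟨hwβ, fun δ hδ => ?_⟩
  have hexpand : (B.coeff (w β) δ : ℝ) = ∑ α ∈ B.Δ, (B.coeff β α : ℝ) * B.coeff (w α) δ := by
    conv_lhs => rw [B.coeff_eq_coord hwβ hδ, B.coeff_spec β hβ.1]
    simp only [map_sum, map_smul, smul_eq_mul]
    exact Finset.sum_congr rfl fun α hα => by
      rw [B.coeff_eq_coord (R.weyl_apply_mem hw (B.subset hα)) hδ]
  have : (B.coeff (w β) δ : ℝ) ≤ 0 := by
    rw [hexpand]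
    refine Finset.sum_nonpos fun α hα => ?_
    by_cases hαS : α ∈ S
    · exact mul_nonpos_of_nonneg_of_nonpos (by exact_mod_cast hβ.2 α hα)
        (by exact_mod_cast (hwS α hαS).2 δ hδ)
    · rw [(B.mem_span_iff_coeff_eq_zero hS hβ.1).mp hβS α hα hαS, Int.cast_zero, zero_mul]
  exact_mod_cast this

lemma isNeg_apply_of_forall_isNeg {w : V ≃ₗᵢ[ℝ] V} (hw : w ∈ R.Weyl)
    (hwΔ : ∀ α ∈ B.Δ, B.IsNeg (w α)) {β : V} (hβ : B.IsPos β) : B.IsNeg (w β) :=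
  isNeg_apply_of_mem_span hw subset_rfl hwΔ hβ
    ((B.mem_span_iff_coeff_eq_zero subset_rfl hβ.1).mpr fun _ hα hα' => absurd hα hα')

lemma eq_of_forall_isNeg {u v : V ≃ₗᵢ[ℝ] V} (hu : u ∈ R.Weyl) (hv : v ∈ R.Weyl)
    (hu' : ∀ β, B.IsPos β → B.IsNeg (u β)) (hv' : ∀ β, B.IsPos β → B.IsNeg (v β)) :
    u = v := by
  have hv_inv : ∀ γ, B.IsNeg γ → B.IsPos (v⁻¹ γ) := by
    intro γ hγ
    refine isPos_of_not_isNeg (R.weyl_apply_mem (inv_mem hv) hγ.1) fun hneg => ?_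
    have := hv' _ hneg.neg
    rw [map_neg, show v (v⁻¹ γ) = γ from v.apply_symm_apply γ] at this
    exact hγ.neg.not_isNeg this
  have : v⁻¹ * u = 1 := B.eq_one_of_forall_isPos (mul_mem (inv_mem hv) hu) fun α hα =>
    hv_inv _ (hu' α (isPos_simple hα))
  exact (inv_mul_eq_one.mp this).symm

lemma isPos_weylP_apply_of_not_mem_span {S : Finset V} (hS : S ⊆ B.Δ) {u : V ≃ₗᵢ[ℝ] V}
    (hu : u ∈ WeylP S) {β : V} (hβ : B.IsPos β) (hβS : β ∉ Submodule.span ℝ (S : Set V)) :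
    B.IsPos (u β) ∧ u β ∉ Submodule.span ℝ (S : Set V) := by
  have huβ : u β ∈ R.Φ := R.weyl_apply_mem (weylP_le_weyl (hS.trans B.subset) hu) hβ.1
  obtain ⟨δ, hδ, hδS, hβδ⟩ : ∃ δ ∈ B.Δ, δ ∉ S ∧ B.coeff β δ ≠ 0 := by
    by_contra! h
    exact hβS ((B.mem_span_iff_coeff_eq_zero hS hβ.1).mpr h)
  have hcoeff : B.coeff (u β) δ = B.coeff β δ :=
    B.coeff_eq_of_sub_mem_span hS huβ hβ.1 (weylP_apply_sub_mem_span hu β) hδ hδS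
  have hpos : 0 < B.coeff (u β) δ := hcoeff ▸ lt_of_le_of_ne (hβ.2 δ hδ) hβδ.symm
  refine ⟨isPos_of_not_isNeg huβ fun hneg => ?_, fun huS => ?_⟩
  · exact (hneg.2 δ hδ).not_gt hpos
  · exact hpos.ne' ((B.mem_span_iff_coeff_eq_zero hS huβ).mp huS δ hδ hδS)

lemma mul_self_eq_one_of_weylP {S : Finset V} (hS : S ⊆ B.Δ) {u : V ≃ₗᵢ[ℝ] V}
    (hu : u ∈ WeylP S) (huS : ∀ α ∈ S, B.IsNeg (u α)) : u * u = 1 := by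
  have huW : u ∈ R.Weyl := weylP_le_weyl (hS.trans B.subset) hu
  refine B.eq_one_of_forall_isPos (mul_mem huW huW) fun α hα => ?_
  by_cases hαS : α ∈ Submodule.span ℝ (S : Set V)
  · have h₁ := isNeg_apply_of_mem_span huW hS huS (isPos_simple hα) hαS
    have h₂ := isNeg_apply_of_mem_span huW hS huS h₁.neg
      (Submodule.neg_mem _ (weylP_apply_mem_span hu hαS))
    simpa using h₂.neg
  · obtain ⟨h₁, h₂⟩ := isPos_weylP_apply_of_not_mem_span hS hu (isPos_simple hα) hαS
    exact (isPos_weylP_apply_of_not_mem_span hS hu h₁ h₂).1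

variable {h : V}

lemma itil_subset : B.Itil h ⊆ B.Δ := Finset.filter_subset _ _

lemma inner_eq_zero_of_mem_itil {α : V} (hα : α ∈ B.Itil h) : ⟪h, α⟫ = 0 :=
  (Finset.mem_filter.mp hα).2

lemma IsHighest.isPos (hh : B.IsHighest h) : B.IsPos h := by
  refine isPos_of_not_isNeg hh.1 fun hneg => ?_
  obtain ⟨γ, hγ⟩ := R.nonempty
  obtain ⟨α, hα, hne⟩ := B.exists_coeff_ne_zero hγ
  have h₁ := hh.2 γ hγ α hα
  have h₂ := hh.2 (-γ) (R.neg_mem hγ) α hα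
  rw [B.coeff_neg hγ hα] at h₂
  have h₃ := hneg.2 α hα
  omega

/-- If `⟪h, α⟫ < 0`, then `sref α h = h + m α` with `m > 0` would be a higher root. -/
lemma IsHighest.inner_simple_nonneg (hh : B.IsHighest h) {α : V} (hα : α ∈ B.Δ) :
    0 ≤ ⟪h, α⟫ := by
  by_contra! hneg
  obtain ⟨n, hn, hcoeff⟩ := B.exists_coeff_sref (B.subset hα) hh.1
  have hn_neg : n < 0 := by
    have hαα := R.inner_self_pos_of_mem (B.subset hα)
    have : (n : ℝ) < 0 := by nlinarith
    exact_mod_cast this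
  have := hh.2 _ (R.reflect_mem α (B.subset hα) h hh.1) α hα
  rw [hcoeff α hα, B.coeff_simple hα hα, if_pos rfl] at this
  omega

lemma IsHighest.inner_pos_of_not_mem_span_itil (hh : B.IsHighest h) {β : V}
    (hβ : B.IsPos β) (hβI : β ∉ Submodule.span ℝ (B.Itil h : Set V)) : 0 < ⟪β, h⟫ := by
  have hterm : ∀ α ∈ B.Δ, 0 ≤ (B.coeff β α : ℝ) * ⟪h, α⟫ := fun α hα =>
    mul_nonneg (by exact_mod_cast hβ.2 α hα) (hh.inner_simple_nonneg hα)
  rw [real_inner_comm, B.inner_eq_sum_coeff h hβ.1]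
  refine lt_of_le_of_ne (Finset.sum_nonneg hterm) fun hsum => hβI ?_
  refine (B.mem_span_iff_coeff_eq_zero itil_subset hβ.1).mpr fun α hα hαI => ?_
  have hα_pos : 0 < ⟪h, α⟫ :=
    (hh.inner_simple_nonneg hα).lt_of_ne' fun h0 => hαI (Finset.mem_filter.mpr ⟨hα, h0⟩)
  have := (Finset.sum_eq_zero_iff_of_nonneg hterm).mp hsum.symm α hα
  exact_mod_cast (mul_eq_zero.mp this).resolve_right hα_pos.ne'

lemma IsHighest.isNeg_sref_apply (hh : B.IsHighest h) {β : V} (hβ : B.IsPos β)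
    (hβh : 0 < ⟪β, h⟫) : B.IsNeg (sref h β) := by
  obtain ⟨n, hn, hcoeff⟩ := B.exists_coeff_sref hh.1 hβ.1
  have hn_pos : 0 < n := by
    have hhh := R.inner_self_pos_of_mem hh.1
    have : (0 : ℝ) < n := by nlinarith
    exact_mod_cast this
  refine ⟨R.reflect_mem h hh.1 β hβ.1, fun δ hδ => ?_⟩
  rw [hcoeff δ hδ]
  nlinarith [hh.2 β hβ.1 δ hδ, hh.isPos.2 δ hδ]

lemma sref_apply_of_mem_span_itil {x : V} (hx : x ∈ Submodule.span ℝ (B.Itil h : Set V)) :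
    sref h x = x := by
  refine Submodule.reflection_mem_subspace_eq_self (Submodule.span_le.mpr (fun α hα => ?_) hx)
  exact Submodule.mem_orthogonal_singleton_iff_inner_right.mpr (inner_eq_zero_of_mem_itil hα)

lemma IsHighest.isNeg_sref_mul_apply (hh : B.IsHighest h) {u : V ≃ₗᵢ[ℝ] V}
    (hu : u ∈ WeylP (B.Itil h)) (huI : ∀ α ∈ B.Itil h, B.IsNeg (u α)) {β : V}
    (hβ : B.IsPos β) : B.IsNeg ((sref h * u) β) := by
  have hI : B.Itil h ⊆ B.Δ := itil_subset
  change B.IsNeg (sref h (u β))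
  by_cases hβI : β ∈ Submodule.span ℝ (B.Itil h : Set V)
  · rw [sref_apply_of_mem_span_itil (weylP_apply_mem_span hu hβI)]
    exact isNeg_apply_of_mem_span (weylP_le_weyl (hI.trans B.subset) hu) hI huI hβ hβI
  · obtain ⟨huβ, huβI⟩ := isPos_weylP_apply_of_not_mem_span hI hu hβ hβI
    exact hh.isNeg_sref_apply huβ (hh.inner_pos_of_not_mem_span_itil huβ huβI)

end Base

/-- with `Ĩ = {α ∈ Δ : (α̃|α) = 0}`, one has `w₀ w_Ĩ = w_Ĩ w₀ = s_{α̃}`,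
where `w₀` is the longest element of `W`, `w_Ĩ` the longest element of `W_Ĩ` and
`α̃` the highest root. -/
theorem w0_mul_wItil_eq_sref_highest (R : NRootSystem V) (B : Base R) {h : V}
    (hh : B.IsHighest h) {w₀ wI : V ≃ₗᵢ[ℝ] V}
    (hw₀ : B.IsLongest R.Weyl w₀) (hwI : B.IsLongest (WeylP (B.Itil h)) wI) :
    w₀ * wI = sref h ∧ wI * w₀ = sref h := by
  have hI : B.Itil h ⊆ B.Δ := Base.itil_subset
  have hWI : WeylP (B.Itil h) ≤ R.Weyl := weylP_le_weyl (hI.trans B.subset)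
  have hwI_neg : ∀ α ∈ B.Itil h, B.IsNeg (wI α) := fun α hα =>
    hwI.isNeg_apply hWI (hI hα) (Subgroup.subset_closure ⟨α, hα, rfl⟩)
  have hwI_sq : wI * wI = 1 := B.mul_self_eq_one_of_weylP hI hwI.1 hwI_neg
  have hw₀_eq : w₀ = sref h * wI :=
    Base.eq_of_forall_isNeg hw₀.1 (mul_mem (R.sref_mem_weyl hh.1) (hWI hwI.1))
      (fun _ => Base.isNeg_apply_of_forall_isNeg hw₀.1 fun α hα =>
        hw₀.isNeg_apply le_rfl hα (R.sref_mem_weyl (B.subset hα)))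
      (fun _ => hh.isNeg_sref_mul_apply hwI.1 hwI_neg)
  have hcomm : wI * sref h = sref h * wI := by
    rw [← mul_inv_eq_iff_eq_mul, mul_sref_mul_inv,
      weylP_apply_eq_self (fun _ => Base.inner_eq_zero_of_mem_itil) hwI.1]
  constructor
  · rw [hw₀_eq, mul_assoc, hwI_sq, mul_one]
  · rw [hw₀_eq, ← mul_assoc, hcomm, mul_assoc, hwI_sq, mul_one]
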